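/- arXiv:1810.08750 — 7 statements merged into one kernel-verified Lean document; each statement's English description precedes it below -/
import Mathlib

section
/- For the Cressie-Read function f_k(t) = (t^k − k t + k − 1)/(k(k−1)) with k ∈ (1, ∞) (and f_k(t) = +∞ for t < 0), the Fenchel conjugate is f_k*(s) = (1/k)[((k−1)s + 1)₊^{k/(k−1)} − 1]. -/
/-!
With `a = (k - 1) s + 1` one has `s t - f_k t = (t a - t ^ k / k) / (k - 1) - 1 / k`,
so `f_k*` is an increasing affine image of the conjugate of `t ↦ t ^ k / k` on `[0, ∞)`.
By Young's inequality `t a ≤ t a₊ ≤ t ^ k / k + a₊ ^ k_* / k_*`, with equality at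
`t = a₊ ^ (k_* - 1)`, that conjugate is `a₊ ^ k_* / k_*`.
-/

open Real Set

theorem isGreatest_image_mul_sub_rpow_div {p q : ℝ} (hpq : p.HolderConjugate q) (a : ℝ) :
    IsGreatest ((fun t => t * a - t ^ p / p) '' Ici 0) (max a 0 ^ q / q) := by
  refine ⟨?_, ?_⟩
  · rcases le_or_gt a 0 with ha | ha
    · refine ⟨0, self_mem_Ici, ?_⟩
      simp [max_eq_right ha, zero_rpow hpq.ne_zero, zero_rpow hpq.symm.ne_zero]
    · -- equality in Young's inequality holds when t ^ p = a ^ q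
      have hpow : (a ^ (q - 1)) ^ p = a ^ q := by
        rw [← rpow_mul ha.le, hpq.symm.sub_one_mul_conj]
      have hmul : a ^ (q - 1) * a = a ^ q := by
        rw [rpow_sub_one ha.ne', div_mul_cancel₀ _ ha.ne']
      refine ⟨a ^ (q - 1), rpow_nonneg ha.le _, ?_⟩
      simp only [hpow, hmul, max_eq_left ha.le]
      linear_combination a ^ q * hpq.one_sub_inv
  · rintro _ ⟨t, ht, rfl⟩
    have young : t * a ≤ t ^ p / p + max a 0 ^ q / q :=
      calc t * a ≤ t * max a 0 := mul_le_mul_of_nonneg_left (le_max_left a 0) ht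
        _ ≤ t ^ p / p + max a 0 ^ q / q :=
          young_inequality_of_nonneg ht (le_max_right a 0) hpq
    dsimp only
    linarith

/-- The Fenchel conjugate of the Cressie-Read function
f_k(t) = (t^k − k t + k − 1)/(k(k−1)) (with f_k = +∞ for t < 0, so the
supremum defining the conjugate is over t ≥ 0) is
f_k*(s) = (1/k)[((k−1)s + 1)₊^{k/(k−1)} − 1]. -/
theorem cressie_read_conjugate (k : ℝ) (hk : 1 < k) (s : ℝ) :
    IsLUB {y : ℝ | ∃ t : ℝ, 0 ≤ t ∧
        y = s * t - (t ^ k - k * t + k - 1) / (k * (k - 1))}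
      ((1 / k) * (max ((k - 1) * s + 1) 0 ^ (k / (k - 1)) - 1)) := by
  have hpq : k.HolderConjugate (k / (k - 1)) := (holderConjugate_iff_eq_conjExponent hk).2 rfl
  have hk₀ : k ≠ 0 := hpq.ne_zero
  have hk₁ : k - 1 ≠ 0 := hpq.sub_one_ne_zero
  have hg : StrictMono fun y : ℝ => y / (k - 1) - 1 / k := fun x y hxy => by
    have := hpq.sub_one_pos
    dsimp only
    gcongr
  have hF : ∀ t : ℝ, s * t - (t ^ k - k * t + k - 1) / (k * (k - 1)) =
      (t * ((k - 1) * s + 1) - t ^ k / k) / (k - 1) - 1 / k := fun t => by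
    field_simp
    ring
  have hset :
      {y : ℝ | ∃ t : ℝ, 0 ≤ t ∧ y = s * t - (t ^ k - k * t + k - 1) / (k * (k - 1))} =
        (fun y => y / (k - 1) - 1 / k) ''
          ((fun t => t * ((k - 1) * s + 1) - t ^ k / k) '' Ici 0) := by
    ext y
    simp [hF, eq_comm]
  have hval : 1 / k * (max ((k - 1) * s + 1) 0 ^ (k / (k - 1)) - 1) =
      max ((k - 1) * s + 1) 0 ^ (k / (k - 1)) / (k / (k - 1)) / (k - 1) - 1 / k := by
    field_simp
  rw [hset, hval]
  exact (hg.map_isGreatest.2 (isGreatest_image_mul_sub_rpow_div hpq _)).isLUB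
end

section
/- Let Z be a bounded nonnegative random variable on a finite probability space with distribution P, and let ρ > 0, k ∈ (1,∞), k_* = k/(k−1), c_k(ρ) = (1 + k(k−1)ρ)^{1/k}. Then the worst-case risk sup{E_Q[Z] : Q ≪ P, D_{f_k}(Q‖P) ≤ ρ} equals inf_{η ∈ ℝ} { c_k(ρ) · (E_P[(Z − η)₊^{k_*}])^{1/k_*} + η }. -/
/-!
Weak duality: write `E_Q[Z] ≤ E_Q[(Z - η)₊] + η` and apply Hölder's inequality in `L^k(P)` to the
likelihood ratio `q / p` and `(Z - η)₊`; under `∑ q = 1` the divergence constraint reads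
`E_P[(q / p)^k] ≤ 1 + k(k-1)ρ = c_k(ρ)^k`.

Strong duality: Hölder is tight for `q ∝ p (Z - η)₊^(k_* - 1)`, and this `q` makes the constraint
active exactly when `c_k(ρ) E_P[(Z - η)₊^(k_* - 1)] = E_P[(Z - η)₊^(k_*)]^(1/k)`. As `η → -∞` the
left side wins because `c_k(ρ) > 1`. Just below `max Z` both sides are multiples of the same power
of `max Z - η`, and the right side wins unless `P` conditioned on the argmax of `Z` is itself
feasible, in which case it attains `max Z`, the value of the dual objective at `η = max Z`.
Otherwise the intermediate value theorem gives an `η` where equality holds.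
-/

open Finset Filter Topology Real

namespace CressieRead

variable {α : Type*} [Fintype α]

noncomputable def divergence (p q : α → ℝ) (k : ℝ) : ℝ :=
  ∑ x, p x * (((q x / p x) ^ k - k * (q x / p x) + k - 1) / (k * (k - 1)))

def IsFeasible (p : α → ℝ) (k ρ : ℝ) (q : α → ℝ) : Prop :=
  (∀ x, 0 ≤ q x) ∧ ∑ x, q x = 1 ∧ divergence p q k ≤ ρ

noncomputable def tailMoment (p Z : α → ℝ) (e η : ℝ) : ℝ := ∑ x, p x * max (Z x - η) 0 ^ e

noncomputable def dualObjective (p Z : α → ℝ) (k ρ η : ℝ) : ℝ :=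
  (1 + k * (k - 1) * ρ) ^ (1 / k) * tailMoment p Z (k / (k - 1)) η ^ ((k - 1) / k) + η

theorem divergence_le_iff {p q : α → ℝ} {k ρ : ℝ} (hp : ∀ x, p x ≠ 0) (hp1 : ∑ x, p x = 1)
    (hq1 : ∑ x, q x = 1) (hk : 1 < k) :
    divergence p q k ≤ ρ ↔ ∑ x, p x * (q x / p x) ^ k ≤ 1 + k * (k - 1) * ρ := by
  have hkk : 0 < k * (k - 1) := by nlinarith
  have hterm (x : α) : p x * (((q x / p x) ^ k - k * (q x / p x) + k - 1) / (k * (k - 1))) =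
      (p x * (q x / p x) ^ k - k * q x + (k - 1) * p x) / (k * (k - 1)) := by
    linear_combination (-k / (k * (k - 1))) * mul_div_cancel₀ (q x) (hp x)
  rw [divergence, sum_congr rfl fun x _ => hterm x, ← sum_div, sum_add_distrib, sum_sub_distrib,
    ← mul_sum, ← mul_sum, hq1, hp1, div_le_iff₀ hkk]
  constructor <;> intro h <;> linarith

theorem inner_le_weighted_Lp_mul_Lq {w f g : α → ℝ} {a b : ℝ} (hab : a.HolderConjugate b)
    (hw : ∀ x, 0 ≤ w x) (hf : ∀ x, 0 ≤ f x) (hg : ∀ x, 0 ≤ g x) :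
    ∑ x, w x * f x * g x ≤
      (∑ x, w x * f x ^ a) ^ (1 / a) * (∑ x, w x * g x ^ b) ^ (1 / b) := by
  have hwf (x : α) : (w x ^ (1 / a) * f x) ^ a = w x * f x ^ a := by
    rw [mul_rpow (rpow_nonneg (hw x) _) (hf x), ← rpow_mul (hw x), one_div_mul_cancel hab.ne_zero,
      rpow_one]
  have hwg (x : α) : (w x ^ (1 / b) * g x) ^ b = w x * g x ^ b := by
    rw [mul_rpow (rpow_nonneg (hw x) _) (hg x), ← rpow_mul (hw x),
      one_div_mul_cancel hab.symm.ne_zero, rpow_one]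
  have hsplit (x : α) : w x ^ (1 / a) * f x * (w x ^ (1 / b) * g x) = w x * f x * g x := by
    have hw1 : w x ^ (1 / a) * w x ^ (1 / b) = w x := by
      rw [← rpow_add' (hw x) (by simp [hab.inv_add_inv_eq_one]), one_div, one_div,
        hab.inv_add_inv_eq_one, rpow_one]
    linear_combination f x * g x * hw1
  have := inner_le_Lp_mul_Lq_of_nonneg (s := univ) (f := fun x => w x ^ (1 / a) * f x)
    (g := fun x => w x ^ (1 / b) * g x) hab
    (fun x _ => mul_nonneg (rpow_nonneg (hw x) _) (hf x))
    (fun x _ => mul_nonneg (rpow_nonneg (hw x) _) (hg x))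
  simpa only [hsplit, hwf, hwg] using this

theorem tailMoment_nonneg {p : α → ℝ} (hp : ∀ x, 0 ≤ p x) (Z : α → ℝ) (e η : ℝ) :
    0 ≤ tailMoment p Z e η :=
  sum_nonneg fun x _ => mul_nonneg (hp x) (rpow_nonneg (le_max_right _ _) e)

theorem holderConjugate_div_sub_one {k : ℝ} (hk : 1 < k) : k.HolderConjugate (k / (k - 1)) :=
  (holderConjugate_iff_eq_conjExponent hk).2 rfl

theorem sum_mul_le_dualObjective {p q : α → ℝ} {k ρ : ℝ} (hp : ∀ x, 0 < p x)
    (hp1 : ∑ x, p x = 1) (hk : 1 < k) (hq : IsFeasible p k ρ q) (Z : α → ℝ) (η : ℝ) :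
    ∑ x, q x * Z x ≤ dualObjective p Z k ρ η := by
  obtain ⟨hq0, hq1, hqD⟩ := hq
  have hmoment := (divergence_le_iff (fun x => (hp x).ne') hp1 hq1 hk).1 hqD
  have hholder := inner_le_weighted_Lp_mul_Lq (holderConjugate_div_sub_one hk)
    (fun x => (hp x).le) (f := fun x => q x / p x) (g := fun x => max (Z x - η) 0)
    (fun x => div_nonneg (hq0 x) (hp x).le) (fun x => le_max_right _ _)
  simp only [mul_div_cancel₀ _ (hp _).ne', one_div_div] at hholder
  calc ∑ x, q x * Z x = ∑ x, q x * (Z x - η) + η := by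
        simp only [mul_sub, sum_sub_distrib, ← sum_mul, hq1]; ring
    _ ≤ ∑ x, q x * max (Z x - η) 0 + η := by
        gcongr with x
        exacts [hq0 x, le_max_left _ _]
    _ ≤ (∑ x, p x * (q x / p x) ^ k) ^ (1 / k) * tailMoment p Z (k / (k - 1)) η ^ ((k - 1) / k)
          + η :=
        add_le_add_left hholder η
    _ ≤ dualObjective p Z k ρ η := by
        have : 0 ≤ ∑ x, p x * (q x / p x) ^ k :=
          sum_nonneg fun x _ => mul_nonneg (hp x).le (rpow_nonneg (div_nonneg (hq0 x) (hp x).le) k)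
        unfold dualObjective
        gcongr
        exact rpow_nonneg (tailMoment_nonneg (fun x => (hp x).le) Z _ η) _

theorem max_zero_rpow_mul_self {a : ℝ} (ha : 0 < a) (t : ℝ) :
    max t 0 ^ a * t = max t 0 ^ (a + 1) := by
  rcases le_total t 0 with ht | ht
  · rw [max_eq_right ht, zero_rpow ha.ne', zero_rpow (by linarith), zero_mul]
  · rw [max_eq_left ht, rpow_add_one' ht (by linarith)]

theorem sum_mul_tilt_div_rpow {p Z : α → ℝ} (hp : ∀ x, p x ≠ 0) {lam r k η : ℝ} (hlam : 0 ≤ lam) :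
    ∑ x, p x * (lam * (p x * max (Z x - η) 0 ^ r) / p x) ^ k =
      lam ^ k * tailMoment p Z (r * k) η := by
  rw [tailMoment, mul_sum]
  refine sum_congr rfl fun x _ => ?_
  rw [mul_div_assoc, mul_div_cancel_left₀ _ (hp x), mul_rpow hlam (rpow_nonneg (le_max_right _ _) _),
    ← rpow_mul (le_max_right _ _)]
  ring

theorem sum_tilt_mul {p Z : α → ℝ} {lam r η : ℝ} (hr : 0 < r) :
    ∑ x, lam * (p x * max (Z x - η) 0 ^ r) * Z x =
      lam * tailMoment p Z (r + 1) η + lam * tailMoment p Z r η * η := by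
  rw [tailMoment, tailMoment, mul_sum, mul_sum, sum_mul, ← sum_add_distrib]
  refine sum_congr rfl fun x _ => ?_
  have := max_zero_rpow_mul_self hr (Z x - η)
  linear_combination lam * p x * this

theorem exists_isFeasible_sum_mul_eq_of_firstOrder {p Z : α → ℝ} {k ρ η : ℝ}
    (hp : ∀ x, 0 < p x) (hp1 : ∑ x, p x = 1) (hk : 1 < k) (hρ : 0 ≤ ρ)
    (hT : 0 < tailMoment p Z (k / (k - 1)) η)
    (hF : (1 + k * (k - 1) * ρ) ^ (1 / k) * tailMoment p Z (k / (k - 1) - 1) η =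
      tailMoment p Z (k / (k - 1)) η ^ (1 / k)) :
    ∃ q, IsFeasible p k ρ q ∧ ∑ x, q x * Z x = dualObjective p Z k ρ η := by
  set e := k / (k - 1) with he
  set c := (1 + k * (k - 1) * ρ) ^ (1 / k)
  set T := tailMoment p Z e η
  set S := tailMoment p Z (e - 1) η
  have hk0 : 0 < k := by linarith
  have hk1 : 0 < k - 1 := by linarith
  have he1 : 0 < e - 1 := by rw [he, sub_pos, one_lt_div hk1]; linarith
  have hb : 0 ≤ 1 + k * (k - 1) * ρ := by positivity
  have hTk : 0 < T ^ (1 / k) := rpow_pos_of_pos hT _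
  set lam := c / T ^ (1 / k)
  have hlam : 0 ≤ lam := div_nonneg (rpow_nonneg hb _) hTk.le
  have hlamS : lam * S = 1 := by rw [div_mul_eq_mul_div, hF, div_self hTk.ne']
  have hlamT : lam * T = c * T ^ ((k - 1) / k) := by
    have h1k : 1 - 1 / k = (k - 1) / k := by field_simp
    rw [div_mul_eq_mul_div, mul_div_assoc, ← rpow_one_sub' hT.le (by rw [h1k]; positivity), h1k]
  have hlamk : lam ^ k * T = 1 + k * (k - 1) * ρ := by
    rw [div_rpow (rpow_nonneg hb _) hTk.le, ← rpow_mul hT.le, one_div_mul_cancel hk0.ne', rpow_one,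
      div_mul_cancel₀ _ hT.ne', ← rpow_mul hb, one_div_mul_cancel hk0.ne', rpow_one]
  have hq1 : ∑ x, lam * (p x * max (Z x - η) 0 ^ (e - 1)) = 1 := by
    rw [← mul_sum]
    exact hlamS
  refine ⟨fun x => lam * (p x * max (Z x - η) 0 ^ (e - 1)), ⟨fun x => ?_, hq1, ?_⟩, ?_⟩
  · exact mul_nonneg hlam (mul_nonneg (hp x).le (rpow_nonneg (le_max_right _ _) _))
  · rw [divergence_le_iff (fun x => (hp x).ne') hp1 hq1 hk,
      sum_mul_tilt_div_rpow (fun x => (hp x).ne') hlam,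
      show (e - 1) * k = e by rw [he]; field_simp; ring]
    exact hlamk.le
  · rw [sum_tilt_mul he1, sub_add_cancel, hlamS, hlamT, one_mul]
    rfl

theorem tailMoment_pos {p Z : α → ℝ} (hp : ∀ x, 0 < p x) {η : ℝ} {x₀ : α} (hx₀ : η < Z x₀)
    (e : ℝ) : 0 < tailMoment p Z e η :=
  sum_pos' (fun x _ => mul_nonneg (hp x).le (rpow_nonneg (le_max_right _ _) e))
    ⟨x₀, mem_univ _, mul_pos (hp x₀) (rpow_pos_of_pos (lt_max_of_lt_left (sub_pos.2 hx₀)) e)⟩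

theorem continuous_tailMoment (p Z : α → ℝ) {e : ℝ} (he : 0 ≤ e) :
    Continuous fun η => tailMoment p Z e η :=
  continuous_finsetSum _ fun _ _ => continuous_const.mul
    (((continuous_const.sub continuous_id).max continuous_const).rpow_const fun _ => Or.inr he)

theorem tailMoment_eq_of_forall_eq_or_le {p Z : α → ℝ} {e η z : ℝ} (he : e ≠ 0) (hηz : η ≤ z)
    (hZ : ∀ x, Z x = z ∨ Z x ≤ η) :
    tailMoment p Z e η = (∑ x ∈ univ.filter (Z · = z), p x) * (z - η) ^ e := by
  rw [tailMoment, sum_filter, sum_mul]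
  refine sum_congr rfl fun x _ => ?_
  split_ifs with hx
  · rw [hx, max_eq_left (sub_nonneg.2 hηz)]
  · rw [max_eq_right (sub_nonpos.2 ((hZ x).resolve_left hx)), zero_rpow he, mul_zero, zero_mul]

theorem dualObjective_of_forall_le {p Z : α → ℝ} {k ρ η : ℝ} (hk : 1 < k) (hZ : ∀ x, Z x ≤ η) :
    dualObjective p Z k ρ η = η := by
  have hk1 : 0 < k - 1 := by linarith
  have hT : tailMoment p Z (k / (k - 1)) η = 0 := sum_eq_zero fun x _ => by
    rw [max_eq_right (sub_nonpos.2 (hZ x)), zero_rpow (by positivity), mul_zero]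
  rw [dualObjective, hT, zero_rpow (by positivity), mul_zero, zero_add]

theorem exists_isFeasible_sum_mul_eq_of_forall_mem_eq {p Z : α → ℝ} {k ρ z : ℝ}
    (hp : ∀ x, 0 < p x) (hp1 : ∑ x, p x = 1) (hk : 1 < k) {s : Finset α} (hs : s.Nonempty)
    (hZ : ∀ x ∈ s, Z x = z) (hmass : (∑ x ∈ s, p x) ^ (1 - k) ≤ 1 + k * (k - 1) * ρ) :
    ∃ q, IsFeasible p k ρ q ∧ ∑ x, q x * Z x = z := by
  classical
  set a := ∑ x ∈ s, p x
  have ha : 0 < a := sum_pos (fun x _ => hp x) hs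
  set q := fun x => if x ∈ s then p x / a else 0
  have hq1 : ∑ x, q x = 1 := by rw [sum_ite_mem, univ_inter, ← sum_div, div_self ha.ne']
  have hmoment (x : α) : p x * (q x / p x) ^ k = if x ∈ s then p x * (a ^ k)⁻¹ else 0 := by
    split_ifs with hx
    · simp only [q, if_pos hx]
      rw [div_right_comm, div_self (hp x).ne', one_div, inv_rpow ha.le]
    · simp only [q, if_neg hx]
      rw [zero_div, zero_rpow (by positivity), mul_zero]
  have hqZ (x : α) : q x * Z x = if x ∈ s then p x / a * z else 0 := by
    split_ifs with hx
    · simp only [q, if_pos hx, hZ x hx]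
    · simp only [q, if_neg hx, zero_mul]
  refine ⟨q, ⟨fun x => ite_nonneg (div_nonneg (hp x).le ha.le) le_rfl, hq1, ?_⟩, ?_⟩
  · rw [divergence_le_iff (fun x => (hp x).ne') hp1 hq1 hk, sum_congr rfl fun x _ => hmoment x,
      sum_ite_mem, univ_inter, ← sum_mul, ← div_eq_mul_inv, ← rpow_one_sub' ha.le (by linarith)]
    exact hmass
  · rw [sum_congr rfl fun x _ => hqZ x, sum_ite_mem, univ_inter, ← sum_mul, ← sum_div,
      div_self ha.ne', one_mul]

theorem exists_lt_mul_tailMoment_lt {p Z : α → ℝ} {k ρ : ℝ} (hp : ∀ x, 0 < p x) (hk : 1 < k)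
    (hρ : 0 ≤ ρ) {x₀ : α} (hx₀ : ∀ x, Z x ≤ Z x₀)
    (hmass : 1 + k * (k - 1) * ρ < (∑ x ∈ univ.filter (Z · = Z x₀), p x) ^ (1 - k)) :
    ∃ η < Z x₀, (1 + k * (k - 1) * ρ) ^ (1 / k) * tailMoment p Z (k / (k - 1) - 1) η <
      tailMoment p Z (k / (k - 1)) η ^ (1 / k) := by
  set z := Z x₀
  set a := ∑ x ∈ univ.filter (Z · = z), p x
  have ha : 0 < a := sum_pos (fun x _ => hp x) ⟨x₀, by simp [z]⟩
  have hk0 : 0 < k := by linarith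
  have hk1 : 0 < k - 1 := by linarith
  have he1 : k / (k - 1) - 1 = 1 / (k - 1) := by field_simp; ring
  have hca : (1 + k * (k - 1) * ρ) ^ (1 / k) * a < a ^ (1 / k) :=
    calc (1 + k * (k - 1) * ρ) ^ (1 / k) * a < (a ^ (1 - k)) ^ (1 / k) * a := by
          gcongr
      _ = a ^ (1 / k) := by
          rw [← rpow_mul ha.le, ← rpow_add_one ha.ne']
          congr 1
          field_simp
          ring
  obtain ⟨η, hηz, hZη⟩ : ∃ η < z, ∀ x, Z x = z ∨ Z x ≤ η := by
    suffices h : ∀ᶠ η in 𝓝[<] z, η < z ∧ ∀ x, Z x = z ∨ Z x ≤ η from h.exists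
    refine eventually_mem_nhdsWithin.and (eventually_all.2 fun x => ?_)
    rcases (hx₀ x).eq_or_lt with h | h
    · exact Eventually.of_forall fun _ => Or.inl h
    · exact Filter.mem_of_superset (Ioo_mem_nhdsLT h) fun _ hη => Or.inr hη.1.le
  have hw : 0 < z - η := sub_pos.2 hηz
  refine ⟨η, hηz, ?_⟩
  rw [tailMoment_eq_of_forall_eq_or_le (by rw [he1]; positivity) hηz.le hZη,
    tailMoment_eq_of_forall_eq_or_le (by positivity) hηz.le hZη,
    mul_rpow ha.le (rpow_nonneg hw.le _), ← rpow_mul hw.le,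
    show k / (k - 1) * (1 / k) = k / (k - 1) - 1 by rw [he1]; field_simp, ← mul_assoc]
  exact mul_lt_mul_of_pos_right hca (rpow_pos_of_pos hw _)

theorem eventually_tailMoment_rpow_lt_atBot {p Z : α → ℝ} {k ρ : ℝ} (hp : ∀ x, 0 < p x)
    (hp1 : ∑ x, p x = 1) (hk : 1 < k) (hρ : 0 < ρ) {m M : ℝ} (hm : ∀ x, m ≤ Z x)
    (hM : ∀ x, Z x ≤ M) :
    ∀ᶠ η in atBot, tailMoment p Z (k / (k - 1)) η ^ (1 / k) <
      (1 + k * (k - 1) * ρ) ^ (1 / k) * tailMoment p Z (k / (k - 1) - 1) η := by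
  set c := (1 + k * (k - 1) * ρ) ^ (1 / k)
  have hk0 : 0 < k := by linarith
  have hk1 : 0 < k - 1 := by linarith
  have he1 : k / (k - 1) - 1 = 1 / (k - 1) := by field_simp; ring
  have hc : 1 < c := one_lt_rpow (by nlinarith [mul_pos hk0 hk1]) (by positivity)
  have hd : 1 < c ^ (k - 1) := one_lt_rpow hc hk1
  obtain ⟨x₁, -⟩ := nonempty_of_sum_ne_zero (hp1.trans_ne one_ne_zero)
  filter_upwards [eventually_lt_atBot m, eventually_lt_atBot (m - (M - m) / (c ^ (k - 1) - 1))]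
    with η hηm hηM
  have hmη : 0 < m - η := sub_pos.2 hηm
  have hMη : M - η < c ^ (k - 1) * (m - η) := by
    have := (div_lt_iff₀ (sub_pos.2 hd)).1 (lt_sub_comm.1 hηM)
    linarith
  have hS : (m - η) ^ (1 / (k - 1)) ≤ tailMoment p Z (k / (k - 1) - 1) η :=
    calc (m - η) ^ (1 / (k - 1)) = ∑ x, p x * (m - η) ^ (1 / (k - 1)) := by
          rw [← sum_mul, hp1, one_mul]
      _ ≤ _ := sum_le_sum fun x _ => by
          rw [he1]
          gcongr
          exacts [(hp x).le, le_max_of_le_left (by linarith [hm x])]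
  have hT : tailMoment p Z (k / (k - 1)) η ≤ (M - η) ^ (k / (k - 1)) :=
    calc tailMoment p Z (k / (k - 1)) η ≤ ∑ x, p x * (M - η) ^ (k / (k - 1)) :=
          sum_le_sum fun x _ => by
            gcongr
            exacts [(hp x).le, max_le (by linarith [hM x]) (by linarith [hm x₁, hM x₁])]
      _ = (M - η) ^ (k / (k - 1)) := by rw [← sum_mul, hp1, one_mul]
  have hMη0 : 0 ≤ M - η := by linarith [hm x₁, hM x₁]
  calc tailMoment p Z (k / (k - 1)) η ^ (1 / k) ≤ ((M - η) ^ (k / (k - 1))) ^ (1 / k) := by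
        gcongr
        exact tailMoment_nonneg (fun x => (hp x).le) Z _ η
    _ = (M - η) ^ (1 / (k - 1)) := by
        rw [← rpow_mul hMη0]
        congr 1
        field_simp
    _ < (c ^ (k - 1) * (m - η)) ^ (1 / (k - 1)) := by gcongr
    _ = c * (m - η) ^ (1 / (k - 1)) := by
        rw [mul_rpow (by positivity) hmη.le, ← rpow_mul (by positivity), mul_one_div_cancel hk1.ne',
          rpow_one]
    _ ≤ c * tailMoment p Z (k / (k - 1) - 1) η := by gcongr

theorem exists_isFeasible_sum_mul_eq_dualObjective {p : α → ℝ} {k ρ : ℝ} (hp : ∀ x, 0 < p x)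
    (hp1 : ∑ x, p x = 1) (hk : 1 < k) (hρ : 0 < ρ) (Z : α → ℝ) :
    ∃ q η, IsFeasible p k ρ q ∧ ∑ x, q x * Z x = dualObjective p Z k ρ η := by
  have : Nonempty α := univ_nonempty_iff.1 (nonempty_of_sum_ne_zero (hp1.trans_ne one_ne_zero))
  obtain ⟨x₀, hx₀⟩ := Finite.exists_max Z
  obtain ⟨x₁, hx₁⟩ := Finite.exists_min Z
  by_cases hmass : (∑ x ∈ univ.filter (Z · = Z x₀), p x) ^ (1 - k) ≤ 1 + k * (k - 1) * ρ
  · obtain ⟨q, hq, hqZ⟩ := exists_isFeasible_sum_mul_eq_of_forall_mem_eq hp hp1 hk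
      ⟨x₀, by simp⟩ (fun x hx => (mem_filter.1 hx).2) hmass
    exact ⟨q, Z x₀, hq, by rw [hqZ, dualObjective_of_forall_le hk hx₀]⟩
  obtain ⟨η₂, hη₂, hF₂⟩ := exists_lt_mul_tailMoment_lt hp hk hρ.le hx₀ (not_le.1 hmass)
  obtain ⟨η₁, hF₁, hη₁₂⟩ := ((eventually_tailMoment_rpow_lt_atBot hp hp1 hk hρ hx₁ hx₀).and
    (eventually_le_atBot η₂)).exists
  have hk1 : 0 < k - 1 := by linarith
  have hcont : Continuous fun η => tailMoment p Z (k / (k - 1)) η ^ (1 / k) -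
      (1 + k * (k - 1) * ρ) ^ (1 / k) * tailMoment p Z (k / (k - 1) - 1) η :=
    ((continuous_tailMoment p Z (by positivity)).rpow_const fun _ => Or.inr (by positivity)).sub
      (continuous_const.mul (continuous_tailMoment p Z
        (sub_nonneg.2 ((one_le_div hk1).2 (by linarith)))))
  obtain ⟨η, hη, hFη⟩ := intermediate_value_Icc hη₁₂ hcont.continuousOn
    ⟨(sub_neg.2 hF₁).le, (sub_pos.2 hF₂).le⟩
  obtain ⟨q, hq, hqZ⟩ := exists_isFeasible_sum_mul_eq_of_firstOrder hp hp1 hk hρ.le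
    (tailMoment_pos hp (hη.2.trans_lt hη₂) _) (sub_eq_zero.1 hFη).symm
  exact ⟨q, η, hq, hqZ⟩

end CressieRead

open CressieRead

theorem cressie_read_dual_general {α : Type*} [Fintype α] (p : α → ℝ)
    (hp : ∀ x, 0 < p x) (hp1 : ∑ x, p x = 1)
    (Z : α → ℝ)
    (k ρ : ℝ) (hk : 1 < k) (hρ : 0 < ρ) :
    sSup {r : ℝ | ∃ q : α → ℝ, (∀ x, 0 ≤ q x) ∧ (∑ x, q x) = 1 ∧
        (∑ x, p x * (((q x / p x) ^ k - k * (q x / p x) + k - 1) / (k * (k - 1)))) ≤ ρ ∧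
        r = ∑ x, q x * Z x} =
      ⨅ η : ℝ, (1 + k * (k - 1) * ρ) ^ (1 / k) *
        (∑ x, p x * max (Z x - η) 0 ^ (k / (k - 1))) ^ ((k - 1) / k) + η := by
  have hweak (q : α → ℝ) (hq : IsFeasible p k ρ q) (η : ℝ) :
      ∑ x, q x * Z x ≤ dualObjective p Z k ρ η :=
    sum_mul_le_dualObjective hp hp1 hk hq Z η
  obtain ⟨q₀, η₀, ⟨hq₀, hq₀1, hq₀D⟩, hq₀Z⟩ :=
    exists_isFeasible_sum_mul_eq_dualObjective hp hp1 hk hρ Z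
  refine le_antisymm ?_ ?_
  · refine csSup_le ⟨_, q₀, hq₀, hq₀1, hq₀D, rfl⟩ ?_
    rintro r ⟨q, hq0, hq1, hqD, rfl⟩
    exact le_ciInf (hweak q ⟨hq0, hq1, hqD⟩)
  · have hbdd : BddAbove {r : ℝ | ∃ q : α → ℝ, (∀ x, 0 ≤ q x) ∧ (∑ x, q x) = 1 ∧
        divergence p q k ≤ ρ ∧ r = ∑ x, q x * Z x} := by
      refine ⟨dualObjective p Z k ρ 0, ?_⟩
      rintro r ⟨q, hq0, hq1, hqD, rfl⟩
      exact hweak q ⟨hq0, hq1, hqD⟩ 0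
    calc (⨅ η, dualObjective p Z k ρ η) ≤ dualObjective p Z k ρ η₀ :=
          ciInf_le ⟨_, Set.forall_mem_range.2 (hweak q₀ ⟨hq₀, hq₀1, hq₀D⟩)⟩ η₀
      _ = ∑ x, q₀ x * Z x := hq₀Z.symm
      _ ≤ _ := le_csSup hbdd ⟨q₀, hq₀, hq₀1, hq₀D, rfl⟩

/-- Dual formula for the Cressie-Read worst-case risk on a finite probability
space: sup{E_Q[Z] : D_{f_k}(Q‖P) ≤ ρ} =
inf_η { c_k(ρ) (E_P[(Z−η)₊^{k_*}])^{1/k_*} + η }, where k_* = k/(k−1) and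
c_k(ρ) = (1 + k(k−1)ρ)^{1/k}. -/
theorem cressie_read_dual {α : Type*} [Fintype α] (p : α → ℝ)
    (hp : ∀ x, 0 < p x) (hp1 : ∑ x, p x = 1)
    (M : ℝ) (Z : α → ℝ) (hZ : ∀ x, Z x ∈ Set.Icc (0 : ℝ) M)
    (k ρ : ℝ) (hk : 1 < k) (hρ : 0 < ρ) :
    sSup {r : ℝ | ∃ q : α → ℝ, (∀ x, 0 ≤ q x) ∧ (∑ x, q x) = 1 ∧
        (∑ x, p x * (((q x / p x) ^ k - k * (q x / p x) + k - 1) / (k * (k - 1)))) ≤ ρ ∧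
        r = ∑ x, q x * Z x} =
      ⨅ η : ℝ, (1 + k * (k - 1) * ρ) ^ (1 / k) *
        (∑ x, p x * max (Z x - η) 0 ^ (k / (k - 1))) ^ ((k - 1) / k) + η :=
  cressie_read_dual_general p hp hp1 Z k ρ hk hρ
end

section
/- Let P be a probability measure on a finite set and ρ > 0. For any bounded function Z, sup{E_Q[Z] : D_f(Q‖P) ≤ ρ} = inf_{λ ≥ 0, η ∈ ℝ} { λ E_P[f*((Z − η)/λ)] + λρ + η }, where f* is the Fenchel conjugate of f (with the convention λ f*(s/λ) interpreted as its limit as λ ↓ 0). -/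
/-!
Weak duality is the Fenchel–Young inequality `s t - f t ≤ f* s` summed over the atoms. For the
converse, the set of attainable triples (divergence, mass, payoff) is convex with nonempty
interior, and `(ρ, 1, sup)` lies outside its interior. A supporting hyperplane there gives
Lagrange multipliers `λ ≥ 0`, `η` for the two constraints; the payoff coefficient is positive
because `q = p` is strictly feasible (`D_f(p‖p) = 0 < ρ`). Since `f ≥ -f*(0)`, the pair
`(λ + ν, η)` is then dual feasible with value at most `sup + ν (f*(0) + ρ)` for every `ν > 0`.
-/

open Set

theorem nonpos_of_forall_nonneg_mul_le {a C : ℝ} (h : ∀ k : ℝ, 0 ≤ k → a * k ≤ C) : a ≤ 0 := by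
  by_contra! ha
  have := h ((|C| + 1) / a) (by positivity)
  rw [mul_div_cancel₀ _ ha.ne'] at this
  linarith [le_abs_self C]

theorem StrongDual.apply_prod_prod (ℓ : StrongDual ℝ (ℝ × ℝ × ℝ)) (y : ℝ × ℝ × ℝ) :
    ℓ y = ℓ (1, 0, 0) * y.1 + ℓ (0, 1, 0) * y.2.1 + ℓ (0, 0, 1) * y.2.2 := by
  have hy : y = y.1 • ((1 : ℝ), (0 : ℝ), (0 : ℝ)) + y.2.1 • ((0 : ℝ), (1 : ℝ), (0 : ℝ)) +
      y.2.2 • ((0 : ℝ), (0 : ℝ), (1 : ℝ)) := by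
    ext <;> simp
  conv_lhs => rw [hy]
  simp only [map_add, map_smul, smul_eq_mul]
  ring

theorem sum_mul_le_of_isLUB {ι : Type*} [Fintype ι] {w m : ι → ℝ} {S : ι → Set ℝ} {K : ℝ}
    (hw : ∀ i, 0 ≤ w i) (hm : ∀ i, IsLUB (S i) (m i))
    (h : ∀ y : ι → ℝ, (∀ i, y i ∈ S i) → ∑ i, w i * y i ≤ K) :
    ∑ i, w i * m i ≤ K := by
  refine le_of_forall_pos_le_add fun ε hε => ?_
  set δ := ε / (∑ i, w i + 1)
  have hW : 0 ≤ ∑ i, w i := Finset.sum_nonneg fun i _ => hw i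
  have hδ : 0 < δ := by positivity
  have hδW : δ * ∑ i, w i ≤ ε := by
    rw [div_mul_eq_mul_div, div_le_iff₀ (by positivity)]
    nlinarith
  choose y hyS hy using fun i => (lt_isLUB_iff (hm i)).1 (sub_lt_self (m i) hδ)
  calc ∑ i, w i * m i ≤ ∑ i, w i * (y i + δ) :=
        Finset.sum_le_sum fun i _ => mul_le_mul_of_nonneg_left (by linarith [hy i]) (hw i)
    _ = ∑ i, w i * y i + δ * ∑ i, w i := by
        rw [Finset.mul_sum, ← Finset.sum_add_distrib]
        simp only [mul_add, mul_comm δ]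
    _ ≤ K + ε := add_le_add (h y hyS) hδW

section

variable {α : Type*} [Fintype α]

noncomputable def fDiv (p : α → ℝ) (f : ℝ → ℝ) (q : α → ℝ) : ℝ :=
  ∑ x, p x * f (q x / p x)

noncomputable def dualObjective (p : α → ℝ) (g : ℝ → ℝ) (Z : α → ℝ) (ρ lam η : ℝ) : ℝ :=
  lam * (∑ x, p x * g ((Z x - η) / lam)) + lam * ρ + η

def attainableSet (p : α → ℝ) (f : ℝ → ℝ) (Z : α → ℝ) : Set (ℝ × ℝ × ℝ) :=
  {y | ∃ q : α → ℝ, (∀ x, 0 ≤ q x) ∧ fDiv p f q ≤ y.1 ∧ ∑ x, q x = y.2.1 ∧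
    y.2.2 ≤ ∑ x, q x * Z x}

variable {p : α → ℝ} {f g : ℝ → ℝ}

theorem sum_mul_le_dualObjective (hp : ∀ x, 0 < p x)
    (hg : ∀ s : ℝ, IsLUB {y : ℝ | ∃ t : ℝ, 0 ≤ t ∧ y = s * t - f t} (g s))
    (Z : α → ℝ) {ρ : ℝ} {q : α → ℝ} (hq : ∀ x, 0 ≤ q x) (hq1 : ∑ x, q x = 1)
    (hqρ : fDiv p f q ≤ ρ) {lam : ℝ} (hlam : 0 < lam) (η : ℝ) :
    ∑ x, q x * Z x ≤ dualObjective p g Z ρ lam η := by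
  have fenchel_young : ∀ x, q x * Z x ≤
      lam * (p x * g ((Z x - η) / lam)) + lam * (p x * f (q x / p x)) + η * q x := by
    intro x
    have h := mul_le_mul_of_nonneg_left ((hg ((Z x - η) / lam)).1
      ⟨q x / p x, div_nonneg (hq x) (hp x).le, rfl⟩) (mul_nonneg hlam.le (hp x).le)
    have h' : lam * p x * ((Z x - η) / lam * (q x / p x) - f (q x / p x)) =
        (Z x - η) * q x - lam * (p x * f (q x / p x)) := by
      field_simp [hlam.ne', (hp x).ne']
    linarith
  calc ∑ x, q x * Z x
      ≤ lam * (∑ x, p x * g ((Z x - η) / lam)) + lam * fDiv p f q + η * ∑ x, q x := by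
        simp only [fDiv, Finset.mul_sum, ← Finset.sum_add_distrib]
        exact Finset.sum_le_sum fun x _ => fenchel_young x
    _ ≤ dualObjective p g Z ρ lam η := by
        rw [dualObjective, hq1]
        nlinarith

theorem dualObjective_add_le (hp : ∀ x, 0 < p x) (hp1 : ∑ x, p x = 1)
    (hg : ∀ s : ℝ, IsLUB {y : ℝ | ∃ t : ℝ, 0 ≤ t ∧ y = s * t - f t} (g s))
    {Z : α → ℝ} {ρ V lam η : ℝ} (hlam : 0 ≤ lam)
    (hmult : ∀ q : α → ℝ, (∀ x, 0 ≤ q x) →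
      ∑ x, q x * Z x ≤ V + lam * (fDiv p f q - ρ) + η * (∑ x, q x - 1))
    {ν : ℝ} (hν : 0 < ν) :
    dualObjective p g Z ρ (lam + ν) η ≤ V + ν * (g 0 + ρ) := by
  have hμ : 0 < lam + ν := by linarith
  suffices h : (lam + ν) * ∑ x, p x * g ((Z x - η) / (lam + ν)) ≤
      V - lam * ρ - η + ν * g 0 by
    rw [dualObjective]
    linarith
  rw [← le_div_iff₀' hμ]
  refine sum_mul_le_of_isLUB (fun x => (hp x).le) (fun x => hg _) fun y hy => ?_
  choose t ht hyt using hy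
  set q : α → ℝ := fun x => p x * t x
  have hqt : ∀ x, q x / p x = t x := fun x => mul_div_cancel_left₀ _ (hp x).ne'
  have hf_ge : -g 0 ≤ fDiv p f q := by
    calc -g 0 = ∑ x, p x * -g 0 := by rw [← Finset.sum_mul, hp1, one_mul]
      _ ≤ fDiv p f q := Finset.sum_le_sum fun x _ => mul_le_mul_of_nonneg_left
          (by linarith [(hg 0).1 ⟨q x / p x, (hqt x).symm ▸ ht x, rfl⟩]) (hp x).le
  have hsum : (lam + ν) * ∑ x, p x * y x =
      ∑ x, q x * Z x - η * ∑ x, q x - (lam + ν) * fDiv p f q := by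
    simp only [hyt, fDiv, hqt, q, Finset.mul_sum, ← Finset.sum_sub_distrib]
    refine Finset.sum_congr rfl fun x _ => ?_
    field_simp
  rw [le_div_iff₀' hμ, hsum]
  nlinarith [hmult q fun x => mul_nonneg (hp x).le (ht x)]

theorem fDiv_const_mul (hp : ∀ x, p x ≠ 0) (hp1 : ∑ x, p x = 1) (w : ℝ) :
    fDiv p f (fun x => w * p x) = f w := by
  simp only [fDiv, mul_div_cancel_right₀ _ (hp _), ← Finset.sum_mul, hp1, one_mul]

theorem convexOn_fDiv (hp : ∀ x, 0 ≤ p x) (hf : ConvexOn ℝ (Ici 0) f) :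
    ConvexOn ℝ (Ici 0) (fDiv p f) := by
  refine ⟨convex_Ici 0, fun q₁ hq₁ q₂ hq₂ a b ha hb hab => ?_⟩
  simp only [fDiv, smul_eq_mul, Finset.mul_sum, ← Finset.sum_add_distrib]
  refine Finset.sum_le_sum fun x _ => ?_
  have h := hf.2 (mem_Ici.2 (div_nonneg (hq₁ x) (hp x)))
    (mem_Ici.2 (div_nonneg (hq₂ x) (hp x))) ha hb hab
  simp only [smul_eq_mul, Pi.add_apply, Pi.smul_apply] at h ⊢
  rw [add_div, mul_div_assoc, mul_div_assoc]
  nlinarith [mul_le_mul_of_nonneg_left h (hp x)]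

theorem convex_attainableSet (hp : ∀ x, 0 ≤ p x) (hf : ConvexOn ℝ (Ici 0) f) (Z : α → ℝ) :
    Convex ℝ (attainableSet p f Z) := by
  rintro y₁ ⟨q₁, hq₁, hD₁, hW₁, hS₁⟩ y₂ ⟨q₂, hq₂, hD₂, hW₂, hS₂⟩ a b ha hb hab
  have hq : ∀ x, 0 ≤ (a • q₁ + b • q₂) x := fun x => by
    simp only [Pi.add_apply, Pi.smul_apply, smul_eq_mul]
    have := hq₁ x; have := hq₂ x; positivity
  refine ⟨a • q₁ + b • q₂, hq, ?_, ?_, ?_⟩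
  · calc fDiv p f (a • q₁ + b • q₂) ≤ a • fDiv p f q₁ + b • fDiv p f q₂ :=
          (convexOn_fDiv hp hf).2 hq₁ hq₂ ha hb hab
      _ ≤ (a • y₁ + b • y₂).1 := by
          simp only [Prod.fst_add, Prod.smul_fst, smul_eq_mul]
          gcongr
  · simp only [Pi.add_apply, Pi.smul_apply, smul_eq_mul, Finset.sum_add_distrib,
      ← Finset.mul_sum, hW₁, hW₂, Prod.snd_add, Prod.smul_snd, Prod.fst_add, Prod.smul_fst]
  · simp only [Pi.add_apply, Pi.smul_apply, smul_eq_mul, add_mul, mul_assoc,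
      Finset.sum_add_distrib, ← Finset.mul_sum, Prod.snd_add, Prod.smul_snd]
    gcongr

theorem interior_attainableSet_nonempty (hp : ∀ x, 0 < p x) (hp1 : ∑ x, p x = 1)
    (hf : ConvexOn ℝ (Ici 0) f) (Z : α → ℝ) :
    (interior (attainableSet p f Z)).Nonempty := by
  set M := max (f (1 / 2)) (f 2)
  set m := -2 * |∑ x, p x * Z x|
  have hbox : Ioi M ×ˢ Ioo (1 / 2) 2 ×ˢ Iio m ⊆ attainableSet p f Z := by
    rintro ⟨u, w, v⟩ ⟨hu, ⟨hw₁, hw₂⟩, hv⟩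
    refine ⟨fun x => w * p x, fun x => by have := hp x; positivity, ?_, ?_, ?_⟩
    · rw [fDiv_const_mul (fun x => (hp x).ne') hp1]
      exact (hf.le_max_of_mem_Icc (by norm_num) (by norm_num) ⟨hw₁.le, hw₂.le⟩).trans
        (le_of_lt hu)
    · simp only [← Finset.mul_sum, hp1, mul_one]
    · simp only [mul_assoc, ← Finset.mul_sum]
      have := neg_abs_le (∑ x, p x * Z x)
      have := abs_nonneg (∑ x, p x * Z x)
      simp only [mem_Iio] at hv
      nlinarith
  have hopen : IsOpen (Ioi M ×ˢ Ioo (1 / 2 : ℝ) 2 ×ˢ Iio m) :=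
    isOpen_Ioi.prod (isOpen_Ioo.prod isOpen_Iio)
  exact ⟨(M + 1, 1, m - 1), hopen.subset_interior_iff.2 hbox
    ⟨by simp, by norm_num, by simp⟩⟩

theorem mk_notMem_interior_attainableSet {Z : α → ℝ} {ρ V : ℝ}
    (hV : ∀ q : α → ℝ, (∀ x, 0 ≤ q x) → ∑ x, q x = 1 → fDiv p f q ≤ ρ →
      ∑ x, q x * Z x ≤ V) :
    (ρ, 1, V) ∉ interior (attainableSet p f Z) := by
  intro h
  obtain ⟨r, hr, hball⟩ := Metric.mem_nhds_iff.1 (mem_interior_iff_mem_nhds.1 h)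
  have hnear : ((ρ, 1, V + r / 2) : ℝ × ℝ × ℝ) ∈ Metric.ball (ρ, 1, V) r := by
    simp [Prod.dist_eq, abs_of_pos hr, hr]
  obtain ⟨q, hq, hqρ, hq1, hqV⟩ := hball hnear
  linarith [hV q hq hq1 hqρ]


theorem exists_lagrange_multipliers (hp : ∀ x, 0 < p x) (hp1 : ∑ x, p x = 1)
    (hf : ConvexOn ℝ (Ici 0) f) (hf1 : f 1 = 0) {Z : α → ℝ} {ρ V : ℝ} (hρ : 0 < ρ)
    (hV : ∀ q : α → ℝ, (∀ x, 0 ≤ q x) → ∑ x, q x = 1 → fDiv p f q ≤ ρ →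
      ∑ x, q x * Z x ≤ V) :
    ∃ lam η : ℝ, 0 ≤ lam ∧ ∀ q : α → ℝ, (∀ x, 0 ≤ q x) →
      ∑ x, q x * Z x ≤ V + lam * (fDiv p f q - ρ) + η * (∑ x, q x - 1) := by
  obtain ⟨ℓ, u, hℓ, hA, hx⟩ := geometric_hahn_banach_of_nonempty_interior
    (convex_attainableSet (fun x => (hp x).le) hf Z) (convex_singleton (ρ, 1, V))
    (disjoint_singleton_right.2 (mk_notMem_interior_attainableSet hV))
    (interior_attainableSet_nonempty hp hp1 hf Z) (singleton_nonempty _)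
  set a := ℓ (1, 0, 0)
  set b := ℓ (0, 1, 0)
  set c := ℓ (0, 0, 1)
  have hsep : ∀ y ∈ attainableSet p f Z,
      a * y.1 + b * y.2.1 + c * y.2.2 ≤ a * ρ + b + c * V := fun y hy => by
    have h := (hA y hy).trans (hx _ rfl)
    rwa [StrongDual.apply_prod_prod ℓ y, StrongDual.apply_prod_prod ℓ (ρ, 1, V), mul_one] at h
  have hray : ∀ w k k' : ℝ, 0 ≤ w → 0 ≤ k → 0 ≤ k' →
      a * (f w + k) + b * w + c * (w * ∑ x, p x * Z x - k') ≤ a * ρ + b + c * V := by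
    intro w k k' hw hk hk'
    refine hsep (f w + k, w, w * ∑ x, p x * Z x - k')
      ⟨fun x => w * p x, fun x => mul_nonneg hw (hp x).le, ?_, ?_, ?_⟩
    · rw [fDiv_const_mul (fun x => (hp x).ne') hp1]
      linarith
    · simp only [← Finset.mul_sum, hp1, mul_one]
    · simp only [mul_assoc, ← Finset.mul_sum]
      linarith
  have ha : a ≤ 0 := by
    refine nonpos_of_forall_nonneg_mul_le (C := a * ρ + c * V - c * ∑ x, p x * Z x)
      fun k hk => ?_
    have := hray 1 k 0 zero_le_one hk le_rfl
    rw [hf1] at this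
    linarith
  have hc : 0 ≤ c := by
    refine neg_nonpos.1 <| nonpos_of_forall_nonneg_mul_le
      (C := a * ρ + c * V - c * ∑ x, p x * Z x) fun k hk => ?_
    have := hray 1 0 k zero_le_one le_rfl hk
    rw [hf1] at this
    linarith
  -- `c = 0` would make `ℓ` vanish: strict feasibility of `q = p` forces `a = 0`, then `b = 0`.
  have hc0 : 0 < c := by
    refine hc.lt_of_ne fun hc0 => hℓ ?_
    have ha0 : a = 0 := by
      have := hray 1 0 0 zero_le_one le_rfl le_rfl
      rw [hf1, ← hc0] at this
      nlinarith
    have hb0 : b = 0 := by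
      have h0 := hray 0 0 0 le_rfl le_rfl le_rfl
      have h2 := hray 2 0 0 zero_le_two le_rfl le_rfl
      rw [ha0, ← hc0] at h0 h2
      linarith
    refine ContinuousLinearMap.ext fun y => ?_
    rw [StrongDual.apply_prod_prod]
    simp [← hc0, ha0, hb0, a, b, c]
  refine ⟨-a / c, -b / c, div_nonneg (neg_nonneg.2 ha) hc, fun q hq => ?_⟩
  have h := hsep (fDiv p f q, ∑ x, q x, ∑ x, q x * Z x) ⟨q, hq, le_rfl, rfl, le_rfl⟩
  rw [← sub_nonneg]
  have hgap : V + -a / c * (fDiv p f q - ρ) + -b / c * (∑ x, q x - 1) - ∑ x, q x * Z x =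
      (a * ρ + b + c * V - (a * fDiv p f q + b * ∑ x, q x + c * ∑ x, q x * Z x)) / c := by
    field_simp
    ring
  rw [hgap]
  exact div_nonneg (by linarith) hc

end

/-- The supremum defining `g = f*` runs over `t ≥ 0` because `f = +∞` on `t < 0`; the
infimum over `λ > 0` equals the one over `λ ≥ 0` since the `λ = 0` term is the limit `λ ↓ 0`. -/
theorem f_divergence_duality {α : Type*} [Fintype α] (p : α → ℝ)
    (hp : ∀ x, 0 < p x) (hp1 : ∑ x, p x = 1)
    (f g : ℝ → ℝ) (hf : ConvexOn ℝ (Set.Ici 0) f) (hf1 : f 1 = 0)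
    (hg : ∀ s : ℝ, IsLUB {y : ℝ | ∃ t : ℝ, 0 ≤ t ∧ y = s * t - f t} (g s))
    (Z : α → ℝ) (ρ : ℝ) (hρ : 0 < ρ) :
    sSup {r : ℝ | ∃ q : α → ℝ, (∀ x, 0 ≤ q x) ∧ (∑ x, q x) = 1 ∧
        (∑ x, p x * f (q x / p x)) ≤ ρ ∧ r = ∑ x, q x * Z x} =
      sInf {r : ℝ | ∃ lam η : ℝ, 0 < lam ∧
        r = lam * (∑ x, p x * g ((Z x - η) / lam)) + lam * ρ + η} := by
  set primal := {r : ℝ | ∃ q : α → ℝ, (∀ x, 0 ≤ q x) ∧ (∑ x, q x) = 1 ∧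
    (∑ x, p x * f (q x / p x)) ≤ ρ ∧ r = ∑ x, q x * Z x}
  set dual := {r : ℝ | ∃ lam η : ℝ, 0 < lam ∧
    r = lam * (∑ x, p x * g ((Z x - η) / lam)) + lam * ρ + η}
  have hweak : ∀ r ∈ primal, ∀ d ∈ dual, r ≤ d := by
    rintro _ ⟨q, hq, hq1, hqρ, rfl⟩ _ ⟨lam, η, hlam, rfl⟩
    exact sum_mul_le_dualObjective hp hg Z hq hq1 hqρ hlam η
  have hp_mem : ∑ x, p x * Z x ∈ primal := ⟨p, fun x => (hp x).le, hp1, by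
    simpa [div_self (hp _).ne', hf1] using hρ.le, rfl⟩
  have hdual_ne : dual.Nonempty := ⟨_, 1, 0, one_pos, rfl⟩
  obtain ⟨lam, η, hlam, hmult⟩ := exists_lagrange_multipliers hp hp1 hf hf1 hρ
    (V := sSup primal) fun q hq hq1 hqρ =>
      le_csSup ⟨_, fun r hr => hweak r hr _ hdual_ne.some_mem⟩ ⟨q, hq, hq1, hqρ, rfl⟩
  have hC : 0 < g 0 + ρ := by
    have := (hg 0).1 ⟨1, zero_le_one, rfl⟩
    rw [hf1] at this
    linarith
  refine le_antisymm (csSup_le ⟨_, hp_mem⟩ fun r hr => le_csInf hdual_ne (hweak r hr)) ?_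
  refine le_of_forall_pos_le_add fun ε hε => ?_
  calc sInf dual ≤ dualObjective p g Z ρ (lam + ε / (g 0 + ρ)) η :=
        csInf_le ⟨_, hweak _ hp_mem⟩ ⟨_, η, by positivity, rfl⟩
    _ ≤ sSup primal + ε / (g 0 + ρ) * (g 0 + ρ) :=
        dualObjective_add_le hp hp1 hg hlam hmult (by positivity)
    _ = sSup primal + ε := by rw [div_mul_cancel₀ _ hC.ne']
end

section
/- Let P₀ be a probability measure and 0 < α ≤ 1. The set {P : ess sup_{P₀} log(dP/dP₀) ≤ log(1/α)} of probability measures P ≪ P₀ equals the set of probability measures P such that there exists a probability measure Q and β ∈ [α, 1] with P₀ = β P + (1−β) Q. -/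
/-- On a finite probability space, the set of probability measures P with
ess sup log(dP/dP₀) ≤ log(1/α) — i.e. with likelihood ratio dP/dP₀ ≤ 1/α,
equivalently α·P ≤ P₀ pointwise — coincides with the set of probability
measures P such that P₀ = β P + (1−β) Q for some probability measure Q and
some β ∈ [α, 1]. -/
theorem renyi_infinity_mixture {α : Type*} [Fintype α]
    (p0 : α → ℝ) (hp0 : ∀ x, 0 ≤ p0 x) (hp01 : ∑ x, p0 x = 1)
    (a : ℝ) (ha : 0 < a) (ha1 : a ≤ 1)
    (p : α → ℝ) (hp : ∀ x, 0 ≤ p x) (hp1 : ∑ x, p x = 1) :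
    (∀ x, a * p x ≤ p0 x) ↔
      ∃ q : α → ℝ, (∀ x, 0 ≤ q x) ∧ (∑ x, q x) = 1 ∧
        ∃ b : ℝ, a ≤ b ∧ b ≤ 1 ∧ ∀ x, p0 x = b * p x + (1 - b) * q x := by
  constructor
  · intro h
    rcases eq_or_lt_of_le ha1 with hae | hlt
    · -- a = 1 : then p0 = p
      have hpe : ∀ x, p0 x = p x := by
        have hsum : ∑ x, (p0 x - p x) = 0 := by
          rw [Finset.sum_sub_distrib, hp01, hp1]; ring
        have hnn : ∀ x ∈ Finset.univ, 0 ≤ p0 x - p x := by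
          intro x _
          have := h x
          rw [hae, one_mul] at this
          linarith
        intro x
        have := (Finset.sum_eq_zero_iff_of_nonneg hnn).mp hsum x (Finset.mem_univ x)
        linarith
      exact ⟨p, hp, hp1, 1, ha1, le_refl 1, fun x => by rw [hpe x]; ring⟩
    · refine ⟨fun x => (p0 x - a * p x) / (1 - a), fun x => ?_, ?_, a, le_refl a, ha1, fun x => ?_⟩
      · apply div_nonneg; linarith [h x]; linarith
      · rw [← Finset.sum_div, Finset.sum_sub_distrib, ← Finset.mul_sum, hp01, hp1]
        rw [mul_one]
        exact div_self (by linarith : (1:ℝ) - a ≠ 0)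
      · rw [mul_comm ((1:ℝ)-a), div_mul_cancel₀ _ (by linarith : (1:ℝ) - a ≠ 0)]
        ring
  · rintro ⟨q, hq, hq1, b, hab, hb1, hmix⟩ x
    have := hmix x
    nlinarith [hq x, hp x]
end

section
/- For a bounded random variable Z on a finite probability space with distribution P₀ and α ∈ (0,1], the conditional value-at-risk CVaR_α(Z) := inf_{η ∈ ℝ} { α^{−1} E_{P₀}[(Z − η)₊] + η } equals sup { E_P[Z] : P ≪ P₀, dP/dP₀ ≤ 1/α }. -/
/-!
Weak duality is the pointwise inequality `p z ≤ a⁻¹ p₀ (z - η)₊ + p η` for `0 ≤ a p ≤ p₀`,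
summed over the space. For the converse, `p ↦ E_p[Z]` attains its maximum on the compact
envelope `{p : 0 ≤ a p ≤ p₀, ∑ p = 1}`. At a maximiser no mass can be moved to a point with a
larger value of `Z`, so with `η` the least value of `Z` charged by `p`, `p` saturates
`a p = p₀` above `η` and vanishes below it. These are exactly the equality cases of the
pointwise inequality, so `E_p[Z]` equals the objective at `η`.
-/

section

open Finset

variable {ι : Type*} [Fintype ι]

def riskEnvelope (p0 : ι → ℝ) (a : ℝ) : Set (ι → ℝ) :=
  {p | (∀ x, 0 ≤ p x) ∧ ∑ x, p x = 1 ∧ ∀ x, a * p x ≤ p0 x}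

noncomputable def cvarObjective (p0 : ι → ℝ) (a : ℝ) (Z : ι → ℝ) (η : ℝ) : ℝ :=
  a⁻¹ * (∑ x, p0 x * max (Z x - η) 0) + η

lemma mul_le_inv_mul_max_sub_add {a p q z η : ℝ} (ha : 0 < a) (hp : 0 ≤ p) (hpq : a * p ≤ q) :
    p * z ≤ a⁻¹ * (q * max (z - η) 0) + p * η := by
  have hle : p * (z - η) ≤ p * max (z - η) 0 := mul_le_mul_of_nonneg_left (le_max_left _ _) hp
  have hpq' : p ≤ a⁻¹ * q := by rwa [inv_mul_eq_div, le_div_iff₀' ha]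
  have hscaled := mul_le_mul_of_nonneg_right hpq' (le_max_right (z - η) 0)
  linarith [mul_assoc a⁻¹ q (max (z - η) 0)]

lemma mul_eq_inv_mul_max_sub_add {a p q z η : ℝ} (ha : a ≠ 0) (hgt : η < z → a * p = q)
    (hlt : z < η → p = 0) : p * z = a⁻¹ * (q * max (z - η) 0) + p * η := by
  rcases lt_trichotomy z η with h | rfl | h
  · simp [hlt h, max_eq_right (sub_nonpos.2 h.le)]
  · simp
  · rw [← hgt h, max_eq_left (sub_nonneg.2 h.le)]
    field_simp
    ring

lemma cvarObjective_eq_sum {p0 p : ι → ℝ} {a : ℝ} (Z : ι → ℝ) (η : ℝ) (hp : ∑ x, p x = 1) :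
    cvarObjective p0 a Z η = ∑ x, (a⁻¹ * (p0 x * max (Z x - η) 0) + p x * η) := by
  rw [sum_add_distrib, ← mul_sum, ← sum_mul, hp, one_mul, cvarObjective]

lemma sum_mul_le_cvarObjective {p0 p : ι → ℝ} {a : ℝ} (ha : 0 < a) (Z : ι → ℝ) (η : ℝ)
    (hp : p ∈ riskEnvelope p0 a) : ∑ x, p x * Z x ≤ cvarObjective p0 a Z η := by
  obtain ⟨hp0, hp1, hpa⟩ := hp
  rw [cvarObjective_eq_sum Z η hp1]
  exact sum_le_sum fun x _ ↦ mul_le_inv_mul_max_sub_add ha (hp0 x) (hpa x)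

lemma sum_mul_eq_cvarObjective {p0 p : ι → ℝ} {a : ℝ} (ha : a ≠ 0) {Z : ι → ℝ} {η : ℝ}
    (hp : ∑ x, p x = 1) (hgt : ∀ x, η < Z x → a * p x = p0 x) (hlt : ∀ x, Z x < η → p x = 0) :
    ∑ x, p x * Z x = cvarObjective p0 a Z η := by
  rw [cvarObjective_eq_sum Z η hp]
  exact sum_congr rfl fun x _ ↦ mul_eq_inv_mul_max_sub_add ha (hgt x) (hlt x)

lemma isCompact_riskEnvelope (p0 : ι → ℝ) {a : ℝ} (ha : 0 < a) :
    IsCompact (riskEnvelope p0 a) := by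
  refine Metric.isCompact_of_isClosed_isBounded ?_
    ((Metric.isBounded_Icc 0 fun x ↦ p0 x / a).subset ?_)
  · simp only [riskEnvelope, Set.ofPred_and, Set.ofPred_forall]
    refine .inter (isClosed_iInter fun x ↦ ?_) (.inter ?_ (isClosed_iInter fun x ↦ ?_))
    · exact isClosed_le continuous_const (continuous_apply x)
    · exact isClosed_eq (by fun_prop) continuous_const
    · exact isClosed_le (by fun_prop) continuous_const
  · rintro p ⟨hp0, -, hpa⟩
    exact ⟨hp0, fun x ↦ by rw [le_div_iff₀' ha]; exact hpa x⟩

lemma mul_eq_of_isMaxOn {p0 p Z : ι → ℝ} {a : ℝ} (ha : 0 < a) (hp : p ∈ riskEnvelope p0 a)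
    (hmax : IsMaxOn (fun q ↦ ∑ x, q x * Z x) (riskEnvelope p0 a) p) {x y : ι}
    (hZ : Z y < Z x) (hy : 0 < p y) : a * p x = p0 x := by
  classical
  obtain ⟨hp0, hp1, hpa⟩ := hp
  by_contra hne
  have hxy : x ≠ y := by rintro rfl; exact hZ.false
  -- Moving mass `ε` from `y` to `x` stays in the envelope and strictly increases the objective.
  set ε := min (p y) ((p0 x - a * p x) / a)
  have hε : 0 < ε := lt_min hy (div_pos (sub_pos.2 ((hpa x).lt_of_ne hne)) ha)
  have hεx : a * (p x + ε) ≤ p0 x := by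
    have := min_le_right (p y) ((p0 x - a * p x) / a)
    rw [le_div_iff₀' ha] at this
    linarith
  set q : ι → ℝ := p + ε • (Pi.single x 1 - Pi.single y 1)
  have hqx : q x = p x + ε := by simp [q, hxy]
  have hqy : q y = p y - ε := by simp [q, hxy.symm, sub_eq_add_neg]
  have hq : ∀ z, z ≠ x → z ≠ y → q z = p z := fun z hzx hzy ↦ by simp [q, hzx, hzy]
  have hεy : ε ≤ p y := min_le_left _ _
  have hqmem : q ∈ riskEnvelope p0 a := by
    refine ⟨fun z ↦ ?_, by simp [q, sum_add_distrib, hp1, ← mul_sum, sum_sub_distrib], fun z ↦ ?_⟩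
    · rcases eq_or_ne z x with rfl | hzx
      · linarith [hp0 z]
      rcases eq_or_ne z y with rfl | hzy
      · linarith
      · exact hq z hzx hzy ▸ hp0 z
    · rcases eq_or_ne z x with rfl | hzx
      · exact hqx ▸ hεx
      rcases eq_or_ne z y with rfl | hzy
      · nlinarith [hpa z]
      · exact hq z hzx hzy ▸ hpa z
  have hgain : ∑ z, q z * Z z = ∑ z, p z * Z z + ε * (Z x - Z y) := by
    simp [q, add_mul, sub_mul, sum_add_distrib, Pi.single_apply, mul_sub]
  have hle : ∑ z, q z * Z z ≤ ∑ z, p z * Z z := hmax hqmem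
  linarith [mul_pos hε (sub_pos.2 hZ)]

lemma exists_slackness_of_isMaxOn {p0 p Z : ι → ℝ} {a : ℝ} (ha : 0 < a)
    (hp : p ∈ riskEnvelope p0 a) (hmax : IsMaxOn (fun q ↦ ∑ x, q x * Z x) (riskEnvelope p0 a) p) :
    ∃ η, (∀ x, η < Z x → a * p x = p0 x) ∧ ∀ x, Z x < η → p x = 0 := by
  obtain ⟨z, -, hz⟩ := exists_lt_of_sum_lt (s := univ) (f := fun _ ↦ (0 : ℝ)) (g := p)
    (by simp [hp.2.1])
  obtain ⟨y, hy, hmin⟩ := exists_min_image (univ.filter fun x ↦ 0 < p x) Z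
    ⟨z, mem_filter.2 ⟨mem_univ z, hz⟩⟩
  refine ⟨Z y, fun x hx ↦ mul_eq_of_isMaxOn ha hp hmax hx (mem_filter.1 hy).2, fun x hx ↦ ?_⟩
  exact ((hp.1 x).eq_of_not_lt fun hpx ↦ hx.not_ge (hmin x (mem_filter.2 ⟨mem_univ x, hpx⟩))).symm

end

theorem cvar_duality_general {α : Type*} [Fintype α]
    (p0 : α → ℝ) (hp0 : ∀ x, 0 ≤ p0 x) (hp01 : ∑ x, p0 x = 1)
    (a : ℝ) (ha : 0 < a) (ha1 : a ≤ 1) (Z : α → ℝ) :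
    (⨅ η : ℝ, a⁻¹ * (∑ x, p0 x * max (Z x - η) 0) + η) =
      sSup {r : ℝ | ∃ p : α → ℝ, (∀ x, 0 ≤ p x) ∧ (∑ x, p x) = 1 ∧
        (∀ x, a * p x ≤ p0 x) ∧ r = ∑ x, p x * Z x} := by
  set S := {r : ℝ | ∃ p : α → ℝ, (∀ x, 0 ≤ p x) ∧ (∑ x, p x) = 1 ∧
    (∀ x, a * p x ≤ p0 x) ∧ r = ∑ x, p x * Z x}
  have hweak : ∀ r ∈ S, ∀ η, r ≤ cvarObjective p0 a Z η := by
    rintro r ⟨p, hp0, hp1, hpa, rfl⟩ η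
    exact sum_mul_le_cvarObjective ha Z η ⟨hp0, hp1, hpa⟩
  obtain ⟨p, hp, hmax⟩ := (isCompact_riskEnvelope p0 ha).exists_isMaxOn
    ⟨p0, hp0, hp01, fun x ↦ mul_le_of_le_one_left (hp0 x) ha1⟩
    (Continuous.continuousOn (f := fun q ↦ ∑ x, q x * Z x) (by fun_prop))
  obtain ⟨η, hgt, hlt⟩ := exists_slackness_of_isMaxOn ha hp hmax
  have hη : cvarObjective p0 a Z η ∈ S :=
    ⟨p, hp.1, hp.2.1, hp.2.2, (sum_mul_eq_cvarObjective ha.ne' hp.2.1 hgt hlt).symm⟩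
  rw [IsGreatest.csSup_eq ⟨hη, fun r hr ↦ hweak r hr η⟩]
  have hleast : IsLeast (Set.range (cvarObjective p0 a Z)) (cvarObjective p0 a Z η) :=
    ⟨⟨η, rfl⟩, by rintro _ ⟨η', rfl⟩; exact hweak _ hη η'⟩
  exact hleast.isGLB.ciInf_eq

/-- CVaR duality on a finite probability space:
inf_η { α⁻¹ E_{P₀}[(Z − η)₊] + η } = sup{E_P[Z] : P ≪ P₀, dP/dP₀ ≤ 1/α}. -/
theorem cvar_duality {α : Type*} [Fintype α] [Nonempty α]
    (p0 : α → ℝ) (hp0 : ∀ x, 0 ≤ p0 x) (hp01 : ∑ x, p0 x = 1)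
    (a : ℝ) (ha : 0 < a) (ha1 : a ≤ 1) (Z : α → ℝ) :
    (⨅ η : ℝ, a⁻¹ * (∑ x, p0 x * max (Z x - η) 0) + η) =
      sSup {r : ℝ | ∃ p : α → ℝ, (∀ x, 0 ≤ p x) ∧ (∑ x, p x) = 1 ∧
        (∀ x, a * p x ≤ p0 x) ∧ r = ∑ x, p x * Z x} :=
  cvar_duality_general p0 hp0 hp01 a ha ha1 Z
end

section
/- Let Z ∈ {0, M} be a Bernoulli-scaled random variable with P(Z = M) = p, let k ∈ (1,∞), ρ > 0. Then the Cressie-Read worst-case risk R_k(Z) = sup{E_Q[Z] : D_{f_k}(Q‖P) ≤ ρ} equals M if and only if p ≥ p_k := (1 + k(k−1)ρ)^{−1/(k−1)}. -/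
/-- For a two-point variable Z ∈ {0, M} with P(Z = M) = p, k ∈ (1,∞), ρ > 0,
the Cressie-Read worst-case risk R_k(Z) = sup{E_Q[Z] : D_{f_k}(Q‖P) ≤ ρ}
equals M iff p ≥ p_k := (1 + k(k−1)ρ)^{−1/(k−1)}. -/
theorem two_point_worst_case_risk (M p k ρ : ℝ) (hM : 0 < M)
    (hp : 0 < p) (hp1 : p < 1) (hk : 1 < k) (hρ : 0 < ρ) :
    sSup {r : ℝ | ∃ q : ℝ, 0 ≤ q ∧ q ≤ 1 ∧
        p * (((q / p) ^ k - k * (q / p) + k - 1) / (k * (k - 1))) +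
          (1 - p) * ((((1 - q) / (1 - p)) ^ k - k * ((1 - q) / (1 - p)) + k - 1) /
            (k * (k - 1))) ≤ ρ ∧
        r = q * M} = M ↔
      (1 + k * (k - 1) * ρ) ^ (-(k - 1)⁻¹) ≤ p := by
  have hk0 : (0:ℝ) < k := lt_trans one_pos hk
  have hk1 : (0:ℝ) < k - 1 := by linarith
  have hc : (0:ℝ) < k * (k - 1) := mul_pos hk0 hk1
  have h1p : (0:ℝ) < 1 - p := by linarith
  set D : ℝ → ℝ := fun q =>
    p * (((q / p) ^ k - k * (q / p) + k - 1) / (k * (k - 1))) +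
      (1 - p) * ((((1 - q) / (1 - p)) ^ k - k * ((1 - q) / (1 - p)) + k - 1) /
        (k * (k - 1))) with hDdef
  change sSup {r : ℝ | ∃ q : ℝ, 0 ≤ q ∧ q ≤ 1 ∧ D q ≤ ρ ∧ r = q * M} = M ↔ _
  -- Step 1 : D 1 ≤ ρ ↔ RHS
  have hb : (0:ℝ) < 1 + k * (k - 1) * ρ := by positivity
  have hpk : (0:ℝ) < p ^ k := Real.rpow_pos_of_pos hp k
  have e1 : D 1 = (p ^ (1 - k) - 1) / (k * (k - 1)) := by
    have hz : ((1:ℝ) - 1) / (1 - p) = 0 := by rw [sub_self, zero_div]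
    have hz2 : ((0:ℝ)) ^ k = 0 := Real.zero_rpow (ne_of_gt hk0)
    have h1k : p ^ (1 - k) = p / p ^ k := by
      rw [Real.rpow_sub hp, Real.rpow_one]
    simp only [hDdef, hz, hz2, one_div, Real.inv_rpow hp.le, h1k]
    field_simp
    ring
  have hq1 : D 1 ≤ ρ ↔ (1 + k * (k - 1) * ρ) ^ (-(k - 1)⁻¹) ≤ p := by
    have hneg : (1:ℝ) - k < 0 := by linarith
    have hinv : -(k - 1)⁻¹ = (1 - k)⁻¹ := by
      rw [show (1:ℝ) - k = -(k - 1) by ring, inv_neg]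
    rw [e1, div_le_iff₀ hc, hinv,
      Real.rpow_inv_le_iff_of_neg hb hp hneg]
    constructor <;> intro h <;> nlinarith
  -- Step 2 : the feasible set is compact and has a greatest element
  have hrk : Continuous fun x : ℝ => x ^ k := Real.continuous_rpow_const hk0.le
  have h1 : Continuous fun q : ℝ => q / p := continuous_id.div_const p
  have h2 : Continuous fun q : ℝ => (1 - q) / (1 - p) :=
    (continuous_const.sub continuous_id).div_const _
  have hkk : (0:ℝ) ≤ k := hk0.le
  have hDcont : Continuous D := by
    rw [hDdef]
    fun_prop (disch := exact hkk)
  set K : Set ℝ := Set.Icc 0 1 ∩ D ⁻¹' Set.Iic ρ with hKdef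
  have hKc : IsCompact K := isCompact_Icc.inter_right (isClosed_Iic.preimage hDcont)
  have hDp : D p = 0 := by
    simp only [hDdef, div_self hp.ne', div_self (ne_of_gt h1p), Real.one_rpow]
    ring
  have hpK : p ∈ K := by
    refine ⟨⟨hp.le, hp1.le⟩, ?_⟩
    simp only [Set.mem_preimage, Set.mem_Iic, hDp]
    exact hρ.le
  obtain ⟨q₀, hq₀K, hq₀ub⟩ := hKc.exists_isGreatest ⟨p, hpK⟩
  have hG : IsGreatest {r : ℝ | ∃ q : ℝ, 0 ≤ q ∧ q ≤ 1 ∧ D q ≤ ρ ∧ r = q * M} (q₀ * M) := by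
    constructor
    · exact ⟨q₀, hq₀K.1.1, hq₀K.1.2, hq₀K.2, rfl⟩
    · rintro r ⟨q, h0, h1', hD, rfl⟩
      exact mul_le_mul_of_nonneg_right (hq₀ub ⟨⟨h0, h1'⟩, hD⟩) hM.le
  rw [hG.csSup_eq]
  constructor
  · intro h
    have hq₀1 : q₀ = 1 := by
      have := mul_right_cancel₀ (ne_of_gt hM) (h.trans (one_mul M).symm)
      exact this
    exact hq1.mp (hq₀1 ▸ hq₀K.2)
  · intro h
    have h1K : (1:ℝ) ∈ K := ⟨⟨zero_le_one, le_refl 1⟩, hq1.mpr h⟩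
    have : q₀ = 1 := le_antisymm hq₀K.1.2 (hq₀ub h1K)
    rw [this, one_mul]
end

section
/- Let f be convex with f(1) = 0 and f strictly convex at 1, and P a probability on {0, M} with P(Z = M) = p ∈ (0,1). Define the binary divergence h_f(q; p) = p f(q/p) + (1−p) f((1−q)/(1−p)). Then q ↦ h_f(q; p) is strictly increasing and continuous on [p, q_max] (where finite), so for each ρ > 0 there is a unique q(p) = sup{q ≥ p : h_f(q; p) ≤ ρ}, and the worst-case risk of Z equals M·q(p). -/
/-! The divergence `h(q) = p f(q/p) + (1-p) f((1-q)/(1-p))` is convex in `q` and vanishes at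
`q = p`. For `p < q ≤ 1` the arguments `q/p` and `(1-q)/(1-p)` lie on opposite sides of `1` and
their mean with weights `p, 1-p` is `1`, so strict convexity of `f` at `1` makes `h(q) > 0`; a
convex function exceeding its value at the left endpoint is strictly increasing. For the risk,
multiplication by `M ≥ 0` commutes with `sSup`, and since `p` is feasible, the feasible points
below `p` do not change the supremum. -/

open Set
open scoped Pointwise

noncomputable def binaryDivergence (f : ℝ → ℝ) (p q : ℝ) : ℝ :=
  p * f (q / p) + (1 - p) * f ((1 - q) / (1 - p))

theorem ConvexOn.strictMonoOn_Icc_of_left_lt {𝕜 β : Type*} [Field 𝕜] [LinearOrder 𝕜]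
    [IsStrictOrderedRing 𝕜] [AddCommMonoid β] [LinearOrder β] [IsOrderedCancelAddMonoid β]
    [Module 𝕜 β] [PosSMulStrictMono 𝕜 β] {f : 𝕜 → β} {a b : 𝕜}
    (hf : ConvexOn 𝕜 (Icc a b) f) (hlt : ∀ x ∈ Ioc a b, f a < f x) :
    StrictMonoOn f (Icc a b) := by
  intro u hu v hv huv
  rcases hu.1.eq_or_lt with rfl | hau
  · exact hlt v ⟨huv, hv.2⟩
  · exact hf.lt_right_of_left_lt (left_mem_Icc.2 (hu.1.trans hu.2)) hv
      (Ioo_subset_openSegment ⟨hau, huv⟩) (hlt u ⟨hau, hu.2⟩)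

theorem ConvexOn.comp_mul_add {f : ℝ → ℝ} {s : Set ℝ} (hf : ConvexOn ℝ s f) (a b : ℝ) :
    ConvexOn ℝ ((fun x => a * x + b) ⁻¹' s) fun x => f (a * x + b) := by
  have hline : ⇑(AffineMap.lineMap b (a + b) : ℝ →ᵃ[ℝ] ℝ) = fun x => a * x + b := by
    ext x
    rw [AffineMap.lineMap_apply_ring', add_sub_cancel_right, mul_comm]
  simpa only [hline, Function.comp_def] using hf.comp_affineMap (AffineMap.lineMap b (a + b))

theorem csSup_inter_Ici_of_mem {α : Type*} [ConditionallyCompleteLinearOrder α] {s : Set α}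
    {a : α} (hs : BddAbove s) (ha : a ∈ s) : sSup (s ∩ Ici a) = sSup s := by
  have ha' : a ∈ s ∩ Ici a := ⟨ha, le_rfl⟩
  refine le_antisymm (csSup_le_csSup hs ⟨a, ha'⟩ inter_subset_left) (csSup_le ⟨a, ha⟩ ?_)
  intro x hx
  rcases le_total x a with hxa | hax
  · exact hxa.trans (le_csSup (hs.mono inter_subset_left) ha')
  · exact le_csSup (hs.mono inter_subset_left) ⟨hx, hax⟩

theorem sSup_sublevel_mul_eq_sSup_sublevel_Ici_mul {g : ℝ → ℝ} {M p ρ : ℝ} (hM : 0 ≤ M)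
    (hp : 0 ≤ p) (hp1 : p ≤ 1) (hgp : g p ≤ ρ) :
    sSup {r : ℝ | ∃ q : ℝ, 0 ≤ q ∧ q ≤ 1 ∧ g q ≤ ρ ∧ r = q * M} =
      sSup {q : ℝ | p ≤ q ∧ q ≤ 1 ∧ g q ≤ ρ} * M := by
  set A := {q : ℝ | 0 ≤ q ∧ q ≤ 1 ∧ g q ≤ ρ}
  have hscale : {r : ℝ | ∃ q, 0 ≤ q ∧ q ≤ 1 ∧ g q ≤ ρ ∧ r = q * M} = M • A := by
    ext r
    simp only [A, mem_smul_set, mem_ofPred_eq, smul_eq_mul]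
    constructor
    · rintro ⟨q, hq0, hq1, hgq, rfl⟩
      exact ⟨q, ⟨hq0, hq1, hgq⟩, mul_comm M q⟩
    · rintro ⟨q, ⟨hq0, hq1, hgq⟩, rfl⟩
      exact ⟨q, hq0, hq1, hgq, mul_comm M q⟩
  have hrestrict : {q : ℝ | p ≤ q ∧ q ≤ 1 ∧ g q ≤ ρ} = A ∩ Ici p := by
    ext q
    simp only [A, mem_inter_iff, mem_ofPred_eq, mem_Ici]
    exact ⟨fun ⟨hpq, hq1, hgq⟩ => ⟨⟨hp.trans hpq, hq1, hgq⟩, hpq⟩,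
      fun ⟨⟨_, hq1, hgq⟩, hpq⟩ => ⟨hpq, hq1, hgq⟩⟩
  have hbdd : BddAbove A := ⟨1, fun q hq => hq.2.1⟩
  have hpA : p ∈ A := ⟨hp, hp1, hgp⟩
  rw [hscale, Real.sSup_smul_of_nonneg hM, hrestrict, csSup_inter_Ici_of_mem hbdd hpA,
    smul_eq_mul, mul_comm]

section binaryDivergence

variable {f : ℝ → ℝ} {p : ℝ}

theorem binaryDivergence_self (hf1 : f 1 = 0) (hp : p ≠ 0) (hp1 : p ≠ 1) :
    binaryDivergence f p p = 0 := by
  rw [binaryDivergence, div_self hp, div_self (sub_ne_zero.2 hp1.symm), hf1]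
  ring

theorem convexOn_binaryDivergence (hf : ConvexOn ℝ (Ici 0) f) (hp : 0 ≤ p) (hp1 : p ≤ 1) :
    ConvexOn ℝ (Icc 0 1) (binaryDivergence f p) := by
  have hleft : ConvexOn ℝ (Icc 0 1) fun q => f (q / p) := by
    have hmap (q : ℝ) : p⁻¹ * q + 0 = q / p := by ring
    refine ((hf.comp_mul_add p⁻¹ 0).subset (fun q hq => ?_) (convex_Icc 0 1)).congr fun q _ => ?_
    · simpa only [mem_preimage, mem_Ici, hmap] using div_nonneg hq.1 hp
    · simp only [hmap]
  have hright : ConvexOn ℝ (Icc 0 1) fun q => f ((1 - q) / (1 - p)) := by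
    have hmap (q : ℝ) : -(1 - p)⁻¹ * q + (1 - p)⁻¹ = (1 - q) / (1 - p) := by ring
    refine ((hf.comp_mul_add (-(1 - p)⁻¹) (1 - p)⁻¹).subset (fun q hq => ?_)
      (convex_Icc 0 1)).congr fun q _ => ?_
    · simpa only [mem_preimage, mem_Ici, hmap] using
        div_nonneg (sub_nonneg.2 hq.2) (sub_nonneg.2 hp1)
    · simp only [hmap]
  exact (hleft.smul hp).add (hright.smul (sub_nonneg.2 hp1))

theorem continuousOn_binaryDivergence (hfc : ContinuousOn f (Ici 0)) (hp : 0 ≤ p)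
    (hp1 : p ≤ 1) :
    ContinuousOn (binaryDivergence f p) (Icc 0 1) := by
  have hleft : ContinuousOn (fun q => f (q / p)) (Icc 0 1) :=
    hfc.comp (by fun_prop) fun q hq => div_nonneg hq.1 hp
  have hright : ContinuousOn (fun q => f ((1 - q) / (1 - p))) (Icc 0 1) :=
    hfc.comp (by fun_prop) fun q hq => div_nonneg (sub_nonneg.2 hq.2) (sub_nonneg.2 hp1)
  exact (continuousOn_const.mul hleft).add (continuousOn_const.mul hright)

theorem binaryDivergence_pos_of_lt (hf1 : f 1 = 0)
    (hstrict : ∀ t0 t1 l : ℝ, 0 ≤ t0 → t0 < 1 → 1 < t1 → 0 < l → l < 1 →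
      f (l * t0 + (1 - l) * t1) < l * f t0 + (1 - l) * f t1)
    (hp : 0 < p) {q : ℝ} (hpq : p < q) (hq : q ≤ 1) : 0 < binaryDivergence f p q := by
  have h1p : 0 < 1 - p := by linarith
  have hmean : (1 - p) * ((1 - q) / (1 - p)) + (1 - (1 - p)) * (q / p) = 1 := by
    field_simp
    ring
  have := hstrict ((1 - q) / (1 - p)) (q / p) (1 - p) (div_nonneg (by linarith) h1p.le)
    ((div_lt_one h1p).2 (by linarith)) ((lt_div_iff₀ hp).2 (by linarith)) h1p (by linarith)
  rw [hmean, hf1] at this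
  rw [binaryDivergence]
  linarith

theorem strictMonoOn_binaryDivergence (hf : ConvexOn ℝ (Ici 0) f) (hf1 : f 1 = 0)
    (hstrict : ∀ t0 t1 l : ℝ, 0 ≤ t0 → t0 < 1 → 1 < t1 → 0 < l → l < 1 →
      f (l * t0 + (1 - l) * t1) < l * f t0 + (1 - l) * f t1)
    (hp : 0 < p) (hp1 : p < 1) : StrictMonoOn (binaryDivergence f p) (Icc p 1) := by
  have hconv : ConvexOn ℝ (Icc p 1) (binaryDivergence f p) :=
    (convexOn_binaryDivergence hf hp.le hp1.le).subset (Icc_subset_Icc_left hp.le)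
      (convex_Icc p 1)
  refine hconv.strictMonoOn_Icc_of_left_lt fun q hq => ?_
  rw [binaryDivergence_self hf1 hp.ne' hp1.ne]
  exact binaryDivergence_pos_of_lt hf1 hstrict hp hq.1 hq.2

end binaryDivergence

/-- On the two-point space Z ∈ {0, M} with P(Z = M) = p ∈ (0,1): for f convex
with f(1) = 0, continuous, and strictly convex at 1, the binary divergence
h_f(q; p) = p f(q/p) + (1−p) f((1−q)/(1−p)) is strictly increasing and
continuous in q on [p, 1], so q(p) = sup{q ≥ p : h_f(q; p) ≤ ρ} is
well-defined, and the worst-case risk sup{qM : h_f(q; p) ≤ ρ} equals M·q(p). -/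
theorem binary_divergence_risk (f : ℝ → ℝ)
    (hf : ConvexOn ℝ (Set.Ici 0) f) (hfc : ContinuousOn f (Set.Ici 0))
    (hf1 : f 1 = 0)
    (hstrict : ∀ t0 t1 l : ℝ, 0 ≤ t0 → t0 < 1 → 1 < t1 → 0 < l → l < 1 →
      f (l * t0 + (1 - l) * t1) < l * f t0 + (1 - l) * f t1)
    (M p ρ : ℝ) (hM : 0 < M) (hp : 0 < p) (hp1 : p < 1) (hρ : 0 < ρ) :
    StrictMonoOn
      (fun q => p * f (q / p) + (1 - p) * f ((1 - q) / (1 - p)))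
      (Set.Icc p 1) ∧
    ContinuousOn
      (fun q => p * f (q / p) + (1 - p) * f ((1 - q) / (1 - p)))
      (Set.Icc p 1) ∧
    sSup {r : ℝ | ∃ q : ℝ, 0 ≤ q ∧ q ≤ 1 ∧
        p * f (q / p) + (1 - p) * f ((1 - q) / (1 - p)) ≤ ρ ∧ r = q * M} =
      (sSup {q : ℝ | p ≤ q ∧ q ≤ 1 ∧
        p * f (q / p) + (1 - p) * f ((1 - q) / (1 - p)) ≤ ρ}) * M := by
  have hself : binaryDivergence f p p ≤ ρ :=
    (binaryDivergence_self hf1 hp.ne' hp1.ne).trans_le hρ.le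
  exact ⟨strictMonoOn_binaryDivergence hf hf1 hstrict hp hp1,
    (continuousOn_binaryDivergence hfc hp.le hp1.le).mono (Icc_subset_Icc_left hp.le),
    sSup_sublevel_mul_eq_sSup_sublevel_Ici_mul hM.le hp.le hp1.le hself⟩
end
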